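/- arXiv:1103.2275 — 2 statements merged into one kernel-verified Lean document; each statement's English description precedes it below -/
import Mathlib

section
/- The number of proper assignments of span at most s equals Σ_{Y ⊆ V} (-1)^{|Y|} · N(V\Y), where N(X) is the number of tuples (I₁,...,I_s) of subsets of X that are proper, have any ℓ consecutive sets pairwise disjoint, and satisfy Σ_j |I_j| = n = |V|. -/
open Finset

/-- the number of proper assignments of span at most s equals
Σ_{Y ⊆ V} (-1)^{|Y|} · N(V \ Y), where N(X) counts the tuples (I₁,…,I_s) of subsets
of X that are proper, have any ℓ consecutive sets pairwise disjoint, and satisfy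
Σ_j |I_j| = n. -/
theorem stmt_7 {V : Type*} [Fintype V] [DecidableEq V] (w : V → V → ℕ) (ℓ s : ℕ)
    (hsymm : ∀ x y, w x y = w y x) (hbound : ∀ x y, w x y ≤ ℓ)
    (hdiag : ∀ v, w v v = 0) :
    ((Nat.card {c : V → Fin s //
        ∀ x y, x ≠ y → w x y ≤ (((c x : ℕ) : ℤ) - ((c y : ℕ) : ℤ)).natAbs} : ℤ)) =
      ∑ Y : Finset V, (-1) ^ Y.card *
        (Nat.card {I : Fin s → Finset V //
          (∀ j : Fin s, I j ⊆ Yᶜ) ∧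
          (∀ i j : Fin s, ∀ x ∈ I i, ∀ y ∈ I j, x ≠ y →
             w x y ≤ (((i : ℕ) : ℤ) - ((j : ℕ) : ℤ)).natAbs) ∧
          (∀ i j : Fin s, i ≠ j → (((i : ℕ) : ℤ) - ((j : ℕ) : ℤ)).natAbs < ℓ →
             Disjoint (I i) (I j)) ∧
          (∑ j : Fin s, (I j).card) = Fintype.card V} : ℤ) := by
  classical
  set P : (Fin s → Finset V) → Prop := fun I =>
    (∀ i j : Fin s, ∀ x ∈ I i, ∀ y ∈ I j, x ≠ y →
       w x y ≤ (((i : ℕ) : ℤ) - ((j : ℕ) : ℤ)).natAbs) ∧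
    (∀ i j : Fin s, i ≠ j → (((i : ℕ) : ℤ) - ((j : ℕ) : ℤ)).natAbs < ℓ →
       Disjoint (I i) (I j)) ∧
    (∑ j : Fin s, (I j).card) = Fintype.card V with hPdef
  -- rewrite each subtype card as a filter card
  have hcardY : ∀ Y : Finset V,
      (Nat.card {I : Fin s → Finset V // (∀ j : Fin s, I j ⊆ Yᶜ) ∧ P I} : ℤ)
        = ∑ I : Fin s → Finset V, (if (∀ j : Fin s, I j ⊆ Yᶜ) ∧ P I then (1 : ℤ) else 0) := by
    intro Y
    rw [Nat.card_eq_fintype_card, Fintype.card_subtype, card_filter]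
    push_cast
    rfl
  have key : ∀ I : Fin s → Finset V,
      (∑ Y : Finset V, (-1 : ℤ) ^ Y.card * (if (∀ j : Fin s, I j ⊆ Yᶜ) ∧ P I then (1 : ℤ) else 0))
        = if P I ∧ (∀ x, ∃ j, x ∈ I j) then 1 else 0 := by
    intro I
    by_cases hP : P I
    · have hiff : ∀ Y : Finset V, ((∀ j : Fin s, I j ⊆ Yᶜ) ↔ Y ⊆ (univ.biUnion I)ᶜ) := by
        intro Y
        constructor
        · intro h x hx
          simp only [mem_compl, mem_biUnion, mem_univ, true_and, not_exists]
          intro j hxj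
          exact absurd (h j hxj) (by simp [hx])
        · intro h j x hx
          simp only [mem_compl]
          intro hxY
          have := h hxY
          simp only [mem_compl, mem_biUnion, mem_univ, true_and, not_exists] at this
          exact this j hx
      have : (∑ Y : Finset V, (-1 : ℤ) ^ Y.card *
            (if (∀ j : Fin s, I j ⊆ Yᶜ) ∧ P I then (1 : ℤ) else 0))
          = ∑ Y ∈ ((univ.biUnion I)ᶜ).powerset, (-1 : ℤ) ^ Y.card := by
        rw [← Finset.sum_filter_add_sum_filter_not univ (fun Y => Y ⊆ (univ.biUnion I)ᶜ)]
        have h1 : ∀ Y ∈ univ.filter (fun Y : Finset V => Y ⊆ (univ.biUnion I)ᶜ),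
            (-1 : ℤ) ^ Y.card * (if (∀ j : Fin s, I j ⊆ Yᶜ) ∧ P I then (1 : ℤ) else 0)
              = (-1 : ℤ) ^ Y.card := by
          intro Y hY
          simp only [mem_filter] at hY
          rw [if_pos ⟨(hiff Y).2 hY.2, hP⟩, mul_one]
        have h2 : ∀ Y ∈ univ.filter (fun Y : Finset V => ¬ Y ⊆ (univ.biUnion I)ᶜ),
            (-1 : ℤ) ^ Y.card * (if (∀ j : Fin s, I j ⊆ Yᶜ) ∧ P I then (1 : ℤ) else 0) = 0 := by
          intro Y hY
          simp only [mem_filter] at hY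
          rw [if_neg (by rintro ⟨h, -⟩; exact hY.2 ((hiff Y).1 h)), mul_zero]
        rw [Finset.sum_congr rfl h1, Finset.sum_congr rfl h2, Finset.sum_const_zero, add_zero]
        apply Finset.sum_congr _ (fun _ _ => rfl)
        ext Y; simp [Finset.mem_powerset]
      rw [this, Finset.sum_powerset_neg_one_pow_card]
      have hcov : ((univ.biUnion I)ᶜ = ∅) ↔ (∀ x, ∃ j, x ∈ I j) := by
        simp [Finset.eq_empty_iff_forall_notMem]
      by_cases hc : (∀ x : V, ∃ j, x ∈ I j)
      · rw [if_pos (hcov.2 hc), if_pos ⟨hP, hc⟩]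
      · rw [if_neg (fun h => hc (hcov.1 h)), if_neg (by rintro ⟨-, h⟩; exact hc h)]
    · simp only [hP, and_false, false_and, if_false, mul_zero, Finset.sum_const_zero]
  -- RHS equals card of covering tuples
  have step1 : (∑ Y : Finset V, (-1 : ℤ) ^ Y.card *
        (Nat.card {I : Fin s → Finset V // (∀ j : Fin s, I j ⊆ Yᶜ) ∧ P I} : ℤ))
      = ((univ.filter fun I : Fin s → Finset V => P I ∧ ∀ x, ∃ j, x ∈ I j).card : ℤ) := by
    calc (∑ Y : Finset V, (-1 : ℤ) ^ Y.card *
        (Nat.card {I : Fin s → Finset V // (∀ j : Fin s, I j ⊆ Yᶜ) ∧ P I} : ℤ))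
        = ∑ Y : Finset V, ∑ I : Fin s → Finset V,
            (-1 : ℤ) ^ Y.card * (if (∀ j : Fin s, I j ⊆ Yᶜ) ∧ P I then (1 : ℤ) else 0) := by
          refine Finset.sum_congr rfl fun Y _ => ?_
          rw [hcardY Y, Finset.mul_sum]
      _ = ∑ I : Fin s → Finset V, ∑ Y : Finset V,
            (-1 : ℤ) ^ Y.card * (if (∀ j : Fin s, I j ⊆ Yᶜ) ∧ P I then (1 : ℤ) else 0) :=
          Finset.sum_comm
      _ = ∑ I : Fin s → Finset V, (if P I ∧ (∀ x, ∃ j, x ∈ I j) then (1 : ℤ) else 0) :=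
          Finset.sum_congr rfl fun I _ => key I
      _ = _ := by rw [card_filter]; push_cast; rfl
  -- now the bijection
  set Q : (V → Fin s) → Prop := fun c =>
    ∀ x y, x ≠ y → w x y ≤ (((c x : ℕ) : ℤ) - ((c y : ℕ) : ℤ)).natAbs with hQdef
  have step2 : Nat.card {c : V → Fin s // Q c}
      = (univ.filter fun I : Fin s → Finset V => P I ∧ ∀ x, ∃ j, x ∈ I j).card := by
    rw [Nat.card_eq_fintype_card, Fintype.card_subtype]
    apply Finset.card_bij (fun c _ => fun j => univ.filter (fun x => c x = j))
    · -- maps into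
      intro c hc
      simp only [mem_filter, mem_univ, true_and] at hc ⊢
      refine ⟨⟨?_, ?_, ?_⟩, ?_⟩
      · intro i j x hx y hy hxy
        simp only [mem_filter, mem_univ, true_and] at hx hy
        subst hx; subst hy
        exact hc x y hxy
      · intro i j hij _
        simp only [Finset.disjoint_left, mem_filter, mem_univ, true_and]
        rintro a rfl h
        exact hij h
      · rw [← Finset.card_eq_sum_card_fiberwise (fun x _ => mem_univ (c x))]
        simp
      · intro x
        exact ⟨c x, by simp⟩
    · -- injective
      intro c hc c' hc' h
      funext x
      have := congrFun h (c x)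
      have hx : x ∈ univ.filter (fun y => c' y = c x) := by
        rw [← this]; simp
      simpa using ((Finset.mem_filter.1 hx).2).symm
    · -- surjective
      intro I hI
      simp only [mem_filter, mem_univ, true_and] at hI
      obtain ⟨⟨hprop, hdisj, hsum⟩, hcov⟩ := hI
      -- each x belongs to exactly one I j
      have hone : ∀ x : V, (univ.filter fun j : Fin s => x ∈ I j).card = 1 := by
        have hsum2 : (∑ x : V, (univ.filter fun j : Fin s => x ∈ I j).card) = Fintype.card V := by
          rw [← hsum]
          simp only [Finset.card_filter]
          rw [Finset.sum_comm]
          refine Finset.sum_congr rfl fun j _ => ?_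
          simp [Finset.sum_ite_mem]
        have hge : ∀ x : V, 1 ≤ (univ.filter fun j : Fin s => x ∈ I j).card := by
          intro x
          obtain ⟨j, hj⟩ := hcov x
          exact Finset.card_pos.2 ⟨j, by simp [hj]⟩
        have heq : (∑ _x : V, (1 : ℕ)) = ∑ x : V, (univ.filter fun j : Fin s => x ∈ I j).card := by
          simp only [Finset.sum_const, smul_eq_mul, mul_one, Finset.card_univ]
          exact hsum2.symm
        have := (Finset.sum_eq_sum_iff_of_le (s := (univ : Finset V))
          (f := fun _ : V => (1 : ℕ))
          (g := fun x : V => (univ.filter fun j : Fin s => x ∈ I j).card)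
          (fun x _ => hge x)).1 heq
        intro x; exact (this x (mem_univ x)).symm
      choose f hf using hcov
      have huniq : ∀ (x : V) (j : Fin s), x ∈ I j → j = f x := by
        intro x j hj
        have h1 := hone x
        rw [Finset.card_eq_one] at h1
        obtain ⟨a, ha⟩ := h1
        have hja : j ∈ ({a} : Finset (Fin s)) := ha ▸ (by simp [hj])
        have hfa : f x ∈ ({a} : Finset (Fin s)) := ha ▸ (by simp [hf x])
        simp only [Finset.mem_singleton] at hja hfa
        rw [hja, hfa]
      refine ⟨f, ?_, ?_⟩
      · simp only [mem_filter, mem_univ, true_and]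
        intro x y hxy
        exact hprop (f x) (f y) x (hf x) y (hf y) hxy
      · funext j
        ext x
        simp only [mem_filter, mem_univ, true_and]
        constructor
        · rintro rfl; exact hf x
        · intro hx; exact (huniq x j hx).symm
  calc ((Nat.card {c : V → Fin s // Q c} : ℤ))
      = ((univ.filter fun I : Fin s → Finset V => P I ∧ ∀ x, ∃ j, x ∈ I j).card : ℤ) := by
        rw [step2]
    _ = _ := step1.symm
end

section
/- Recurrence for the dynamic programming table: for i ≥ ℓ and pairwise disjoint J₁,...,J_{ℓ-1} ⊆ X, T^X_i(J₁,...,J_{ℓ-1}) = [ (J₁,...,J_{ℓ-1}) is proper ] · Σ_{J₀ ⊆ X ∩ proper(J₁,...,J_{ℓ-1})} T^X_{i-1}(J₀,J₁,...,J_{ℓ-2}), where proper(J₁,...,J_{ℓ-1}) is the set of vertices v ∉ ⋃_j J_j such that for each j and each x ∈ J_j, j ≥ w(v,x). -/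
/-!
A tuple counted by `T^X_i(J₁,…,J_{ℓ-1})` is determined by its entry `J₀` at position `i - ℓ`
together with the tuple obtained by emptying position `i - 1`, which is counted by
`T^X_{i-1}(J₀,J₁,…,J_{ℓ-2})`. Conversely, writing `J_{ℓ-1}` back at position `i - 1` yields a
tuple counted by `T^X_i` as soon as the window is proper and `J₀ ⊆ X ∩ proper(J₁,…,J_{ℓ-1})`:
positions at distance `≥ ℓ` from `i - 1` impose nothing since `w` is `ℓ`-bounded, and the
remaining ones hold `J₀, J₁, …, J_{ℓ-2}`, which are compatible with `J_{ℓ-1}` by these two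
assumptions. Summing the fibres over `J₀` gives the recurrence.
-/

open Classical in
/-- Tuples in `U`: proper and with any `ℓ` consecutive entries pairwise disjoint. -/
noncomputable def TTable {V : Type*} [Fintype V] [DecidableEq V]
    (w : V → V → ℕ) (ℓ s : ℕ) (X : Finset V) (i : ℕ)
    (J : Fin (ℓ - 1) → Finset V) : ℕ :=
  Nat.card {I : Fin s → Finset V //
    (∀ a b : Fin s, ∀ x ∈ I a, ∀ y ∈ I b, x ≠ y →
       w x y ≤ (((a : ℕ) : ℤ) - ((b : ℕ) : ℤ)).natAbs) ∧
    (∀ a b : Fin s, a ≠ b → (((a : ℕ) : ℤ) - ((b : ℕ) : ℤ)).natAbs < ℓ →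
       Disjoint (I a) (I b)) ∧
    (∀ k : Fin s, (k : ℕ) < i - (ℓ - 1) → I k ⊆ X) ∧
    (∀ r : Fin (ℓ - 1), ∀ h : i - (ℓ - 1) + (r : ℕ) < s,
       I ⟨i - (ℓ - 1) + (r : ℕ), h⟩ = J r) ∧
    (∀ k : Fin s, i ≤ (k : ℕ) → I k = ∅)}

/-- The window `(J₁,…,J_{ℓ-1})` is proper. -/
def ProperWindow {V : Type*} (w : V → V → ℕ) (ℓ : ℕ)
    (J : Fin (ℓ - 1) → Finset V) : Prop :=
  ∀ a b : Fin (ℓ - 1), ∀ x ∈ J a, ∀ y ∈ J b, x ≠ y →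
    w x y ≤ (((a : ℕ) : ℤ) - ((b : ℕ) : ℤ)).natAbs

open Classical in
/-- `proper(J₁,…,J_{ℓ-1})`: vertices outside ⋃ J_j compatible with the window. -/
noncomputable def ProperSet {V : Type*} [Fintype V] [DecidableEq V]
    (w : V → V → ℕ) (ℓ : ℕ) (J : Fin (ℓ - 1) → Finset V) : Finset V :=
  Finset.univ.filter (fun v =>
    (∀ j : Fin (ℓ - 1), v ∉ J j) ∧
    ∀ j : Fin (ℓ - 1), ∀ x ∈ J j, w v x ≤ (j : ℕ) + 1)

/-- Prepend `J₀` to the window, dropping its last entry. -/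
def ShiftWindow {V : Type*} (ℓ : ℕ) (J0 : Finset V)
    (J : Fin (ℓ - 1) → Finset V) : Fin (ℓ - 1) → Finset V :=
  fun r => if (r : ℕ) = 0 then J0
    else J ⟨(r : ℕ) - 1, Nat.lt_of_le_of_lt (Nat.sub_le _ _) r.isLt⟩

open Finset Function

structure IsTableTuple {V : Type*} (w : V → V → ℕ) (ℓ s : ℕ) (X : Finset V) (i : ℕ)
    (J : Fin (ℓ - 1) → Finset V) (I : Fin s → Finset V) : Prop where
  proper : ∀ a b : Fin s, ∀ x ∈ I a, ∀ y ∈ I b, x ≠ y →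
    w x y ≤ (((a : ℕ) : ℤ) - ((b : ℕ) : ℤ)).natAbs
  disjoint : ∀ a b : Fin s, a ≠ b → (((a : ℕ) : ℤ) - ((b : ℕ) : ℤ)).natAbs < ℓ →
    Disjoint (I a) (I b)
  subset : ∀ k : Fin s, (k : ℕ) < i - (ℓ - 1) → I k ⊆ X
  window : ∀ r : Fin (ℓ - 1), ∀ h : i - (ℓ - 1) + (r : ℕ) < s,
    I ⟨i - (ℓ - 1) + (r : ℕ), h⟩ = J r
  empty : ∀ k : Fin s, i ≤ (k : ℕ) → I k = ∅

section TableTuple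

variable {V : Type*} {w : V → V → ℕ} {ℓ s i : ℕ} {X J0 : Finset V}
  {J : Fin (ℓ - 1) → Finset V} {I : Fin s → Finset V}

open Classical in
theorem TTable_eq_card [Fintype V] [DecidableEq V] (w : V → V → ℕ) (ℓ s : ℕ) (X : Finset V)
    (i : ℕ) (J : Fin (ℓ - 1) → Finset V) :
    TTable w ℓ s X i J = #{I | IsTableTuple w ℓ s X i J I} := by
  rw [TTable, Nat.card_eq_fintype_card, Fintype.card_subtype]
  exact congrArg card <| filter_congr fun _ _ =>
    ⟨fun ⟨h₁, h₂, h₃, h₄, h₅⟩ => ⟨h₁, h₂, h₃, h₄, h₅⟩,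
      fun ⟨h₁, h₂, h₃, h₄, h₅⟩ => ⟨h₁, h₂, h₃, h₄, h₅⟩⟩

theorem mem_properSet [Fintype V] [DecidableEq V] {v : V} :
    v ∈ ProperSet w ℓ J ↔
      (∀ j : Fin (ℓ - 1), v ∉ J j) ∧ ∀ j : Fin (ℓ - 1), ∀ x ∈ J j, w v x ≤ (j : ℕ) + 1 := by
  simp [ProperSet]

theorem shiftWindow_of_val_eq_zero {r : Fin (ℓ - 1)} (hr : (r : ℕ) = 0) :
    ShiftWindow ℓ J0 J r = J0 :=
  if_pos hr

theorem shiftWindow_of_val_eq_succ {r j : Fin (ℓ - 1)} (hr : (r : ℕ) = j + 1) :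
    ShiftWindow ℓ J0 J r = J j := by
  rw [ShiftWindow, if_neg (by omega)]
  exact congrArg J (Fin.ext (by simp only; omega))

theorem IsTableTuple.apply_eq_of_window (h : IsTableTuple w ℓ s X i J I) {k : Fin s}
    {r : Fin (ℓ - 1)} (hk : (k : ℕ) = i - (ℓ - 1) + r) : I k = J r := by
  rw [show k = ⟨_, hk ▸ k.isLt⟩ from Fin.ext hk]
  exact h.window r _

theorem IsTableTuple.properWindow (hi : ℓ ≤ i) (his : i ≤ s) (h : IsTableTuple w ℓ s X i J I) :
    ProperWindow w ℓ J := by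
  intro a b x hx y hy hxy
  have := a.isLt
  have := b.isLt
  have ha : i - (ℓ - 1) + (a : ℕ) < s := by omega
  have hb : i - (ℓ - 1) + (b : ℕ) < s := by omega
  have := h.proper ⟨_, ha⟩ ⟨_, hb⟩ x (by rwa [h.window a ha]) y (by rwa [h.window b hb]) hxy
  simp only at this
  omega

theorem IsTableTuple.apply_subset_properSet [Fintype V] [DecidableEq V] (hl : 2 ≤ ℓ)
    (hi : ℓ ≤ i) (his : i ≤ s) (h : IsTableTuple w ℓ s X i J I) {p : Fin s} (hp : (p : ℕ) = i - ℓ) :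
    I p ⊆ X ∩ ProperSet w ℓ J := by
  intro v hv
  have hwin : ∀ j : Fin (ℓ - 1), ∃ k : Fin s, (k : ℕ) = i - ℓ + 1 + j ∧ I k = J j := fun j =>
    have := j.isLt
    ⟨⟨i - ℓ + 1 + j, by omega⟩, rfl, h.apply_eq_of_window (by simp only; omega)⟩
  have hnotin : ∀ j : Fin (ℓ - 1), v ∉ J j := by
    intro j hvj
    obtain ⟨k, hk, hIk⟩ := hwin j
    exact disjoint_left.1 (h.disjoint p k (Fin.ne_of_val_ne (by omega)) (by omega)) hv
      (hIk ▸ hvj)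
  refine mem_inter.2 ⟨h.subset p (by omega) hv, mem_properSet.2 ⟨hnotin, ?_⟩⟩
  intro j x hx
  obtain ⟨k, hk, hIk⟩ := hwin j
  have := h.proper p k v hv x (hIk ▸ hx) fun e => hnotin j (e ▸ hx)
  omega

theorem IsTableTuple.truncate (hl : 2 ≤ ℓ) (hi : ℓ ≤ i) (h : IsTableTuple w ℓ s X i J I)
    {p q : Fin s} (hp : (p : ℕ) = i - ℓ) (hq : (q : ℕ) = i - 1) :
    IsTableTuple w ℓ s X (i - 1) (ShiftWindow ℓ (I p) J) (update I q ∅) := by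
  have hsub : ∀ a, update I q ∅ a ⊆ I a := fun a => by
    rcases eq_or_ne a q with rfl | hne
    · simp
    · rw [update_of_ne hne]
  have hkeep : ∀ a : Fin s, (a : ℕ) < i - 1 → update I q ∅ a = I a :=
    fun a ha => update_of_ne (Fin.ne_of_val_ne (by omega)) _ _
  refine ⟨fun a b x hx y hy => h.proper a b x (hsub a hx) y (hsub b hy),
    fun a b hab hd => (h.disjoint a b hab hd).mono (hsub a) (hsub b),
    fun k hk => ?_, fun r hr => ?_, fun k hk => ?_⟩
  · rw [hkeep k (by omega)]
    exact h.subset k (by omega)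
  · have := r.isLt
    rw [hkeep _ (by simp only; omega)]
    rcases Nat.eq_zero_or_pos r with h0 | h0
    · rw [shiftWindow_of_val_eq_zero h0]
      exact congrArg I (Fin.ext (by simp only; omega))
    · have hr : (r : ℕ) = (⟨r - 1, by omega⟩ : Fin (ℓ - 1)) + 1 := by simp only; omega
      rw [shiftWindow_of_val_eq_succ hr]
      exact h.apply_eq_of_window (by simp only; omega)
  · rcases eq_or_ne k q with rfl | hne
    · exact update_self ..
    · exact (update_of_ne hne _ _).trans (h.empty k (by have := Fin.val_ne_of_ne hne; omega))

theorem proper_update (hsymm : ∀ x y, w x y = w y x)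
    (hI : ∀ a b : Fin s, ∀ x ∈ I a, ∀ y ∈ I b, x ≠ y →
      w x y ≤ (((a : ℕ) : ℤ) - ((b : ℕ) : ℤ)).natAbs)
    {q : Fin s} {C : Finset V} (hC : ∀ x ∈ C, ∀ y ∈ C, x ≠ y → w x y = 0)
    (hCI : ∀ b ≠ q, ∀ x ∈ C, ∀ y ∈ I b, x ≠ y →
      w x y ≤ (((q : ℕ) : ℤ) - ((b : ℕ) : ℤ)).natAbs) :
    ∀ a b : Fin s, ∀ x ∈ update I q C a, ∀ y ∈ update I q C b, x ≠ y →
      w x y ≤ (((a : ℕ) : ℤ) - ((b : ℕ) : ℤ)).natAbs := by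
  intro a b x hx y hy hxy
  rcases eq_or_ne a q with rfl | ha
  · rw [update_self] at hx
    rcases eq_or_ne b a with rfl | hb
    · rw [update_self] at hy
      exact (hC x hx y hy hxy).trans_le (Nat.zero_le _)
    · rw [update_of_ne hb] at hy
      exact hCI b hb x hx y hy hxy
  · rw [update_of_ne ha] at hx
    rcases eq_or_ne b q with rfl | hb
    · rw [update_self] at hy
      have := hCI a ha y hy x hx hxy.symm
      rw [hsymm]
      omega
    · rw [update_of_ne hb] at hy
      exact hI a b x hx y hy hxy

theorem disjoint_update
    (hI : ∀ a b : Fin s, a ≠ b → (((a : ℕ) : ℤ) - ((b : ℕ) : ℤ)).natAbs < ℓ →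
      Disjoint (I a) (I b))
    {q : Fin s} {C : Finset V}
    (hCI : ∀ b ≠ q, (((q : ℕ) : ℤ) - ((b : ℕ) : ℤ)).natAbs < ℓ → Disjoint C (I b)) :
    ∀ a b : Fin s, a ≠ b → (((a : ℕ) : ℤ) - ((b : ℕ) : ℤ)).natAbs < ℓ →
      Disjoint (update I q C a) (update I q C b) := by
  intro a b hab hd
  rcases eq_or_ne a q with rfl | ha
  · rw [update_self, update_of_ne hab.symm]
    exact hCI b hab.symm hd
  · rw [update_of_ne ha]
    rcases eq_or_ne b q with rfl | hb
    · rw [update_self]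
      exact (hCI a ha (by omega)).symm
    · rw [update_of_ne hb]
      exact hI a b hab hd

theorem IsTableTuple.compatible_last [Fintype V] [DecidableEq V] (hl : 2 ≤ ℓ) (hi : ℓ ≤ i)
    (hsymm : ∀ x y, w x y = w y x) (hbound : ∀ x y, w x y ≤ ℓ) (hPW : ProperWindow w ℓ J)
    (hJdisj : ∀ a b, a ≠ b → Disjoint (J a) (J b)) (hJ0 : J0 ⊆ X ∩ ProperSet w ℓ J)
    (h : IsTableTuple w ℓ s X (i - 1) (ShiftWindow ℓ J0 J) I) {q b : Fin s}
    (hq : (q : ℕ) = i - 1) (hb : b ≠ q) :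
    (∀ x ∈ J ⟨ℓ - 2, by omega⟩, ∀ y ∈ I b, x ≠ y →
        w x y ≤ (((q : ℕ) : ℤ) - ((b : ℕ) : ℤ)).natAbs) ∧
      ((((q : ℕ) : ℤ) - ((b : ℕ) : ℤ)).natAbs < ℓ → Disjoint (J ⟨ℓ - 2, by omega⟩) (I b)) := by
  have := b.isLt
  have := Fin.val_ne_of_ne hb
  rcases lt_or_ge (b : ℕ) (i - ℓ) with hfar | hge
  · exact ⟨fun x _ y _ _ => (hbound x y).trans (by omega), fun hd => absurd hd (by omega)⟩
  rcases eq_or_lt_of_le hge with hfirst | hmid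
  · have hIb : I b = J0 := (h.apply_eq_of_window (r := ⟨0, by omega⟩) (by simp only; omega)).trans
      (shiftWindow_of_val_eq_zero rfl)
    have hJ0P : ∀ y ∈ I b, y ∈ ProperSet w ℓ J := fun y hy => (mem_inter.1 (hJ0 (hIb ▸ hy))).2
    refine ⟨fun x hx y hy _ => ?_,
      fun _ => disjoint_right.2 fun y hy => (mem_properSet.1 (hJ0P y hy)).1 _⟩
    have := (mem_properSet.1 (hJ0P y hy)).2 _ x hx
    rw [hsymm]
    simp only at this
    omega
  rcases lt_or_gt_of_ne hb with hmid' | hbeyond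
  · have hj : (b : ℕ) - (i - ℓ) - 1 < ℓ - 1 := by omega
    have hIb : I b = J ⟨_, hj⟩ :=
      (h.apply_eq_of_window (r := ⟨b - (i - ℓ), by omega⟩) (by simp only; omega)).trans
        (shiftWindow_of_val_eq_succ (by simp only; omega))
    rw [hIb]
    refine ⟨fun x hx y hy hxy => ?_, fun _ => hJdisj _ _ (Fin.ne_of_val_ne (by simp only; omega))⟩
    have := hPW _ _ x hx y hy hxy
    simp only at this
    omega
  · rw [h.empty b (by omega)]
    simp

theorem IsTableTuple.extend [Fintype V] [DecidableEq V] (hl : 2 ≤ ℓ) (hi : ℓ ≤ i)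
    (hsymm : ∀ x y, w x y = w y x) (hbound : ∀ x y, w x y ≤ ℓ) (hPW : ProperWindow w ℓ J)
    (hJdisj : ∀ a b, a ≠ b → Disjoint (J a) (J b)) (hJ0 : J0 ⊆ X ∩ ProperSet w ℓ J)
    (h : IsTableTuple w ℓ s X (i - 1) (ShiftWindow ℓ J0 J) I)
    {q : Fin s} (hq : (q : ℕ) = i - 1) :
    IsTableTuple w ℓ s X i J (update I q (J ⟨ℓ - 2, by omega⟩)) := by
  have hcompat : ∀ b ≠ q, _ := fun b hb =>
    h.compatible_last hl hi hsymm hbound hPW hJdisj hJ0 hq hb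
  have hkeep : ∀ a : Fin s, (a : ℕ) < i - 1 → update I q (J ⟨ℓ - 2, by omega⟩) a = I a :=
    fun a ha => update_of_ne (Fin.ne_of_val_ne (by omega)) _ _
  refine ⟨proper_update hsymm h.proper (fun x hx y hy hxy => ?_) fun b hb => (hcompat b hb).1,
    disjoint_update h.disjoint (fun b hb => (hcompat b hb).2), fun k hk => ?_, fun r hr => ?_,
    fun k hk => ?_⟩
  · simpa using hPW _ _ x hx y hy hxy
  · rw [hkeep k (by omega)]
    rcases lt_or_eq_of_le (Nat.le_of_lt_succ (by omega : (k : ℕ) < i - ℓ + 1)) with hlt | heq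
    · exact h.subset k (by omega)
    · rw [h.apply_eq_of_window (r := ⟨0, by omega⟩) (by simp only; omega),
        shiftWindow_of_val_eq_zero rfl]
      exact fun v hv => (mem_inter.1 (hJ0 hv)).1
  · have := r.isLt
    rcases eq_or_ne (r : ℕ) (ℓ - 2) with hlast | hlast
    · rw [show (⟨_, hr⟩ : Fin s) = q from Fin.ext (by simp only; omega), update_self]
      exact congrArg J (Fin.ext (by simp only; omega))
    · rw [hkeep _ (by simp only; omega),
        h.apply_eq_of_window (r := ⟨r + 1, by omega⟩) (by simp only; omega),
        shiftWindow_of_val_eq_succ rfl]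
  · rw [update_of_ne (Fin.ne_of_val_ne (by omega))]
    exact h.empty k (by omega)

open Classical in
theorem card_isTableTuple_fiber [Fintype V] [DecidableEq V] (hl : 2 ≤ ℓ) (hi : ℓ ≤ i)
    (his : i ≤ s) (hsymm : ∀ x y, w x y = w y x) (hbound : ∀ x y, w x y ≤ ℓ)
    (hPW : ProperWindow w ℓ J) (hJdisj : ∀ a b, a ≠ b → Disjoint (J a) (J b))
    (hJ0 : J0 ⊆ X ∩ ProperSet w ℓ J) :
    #{I ∈ {I | IsTableTuple w ℓ s X i J I} | I ⟨i - ℓ, by omega⟩ = J0} =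
      #{I | IsTableTuple w ℓ s X (i - 1) (ShiftWindow ℓ J0 J) I} := by
  set p : Fin s := ⟨i - ℓ, by omega⟩
  set q : Fin s := ⟨i - 1, by omega⟩
  refine card_bij' (fun I _ => update I q ∅) (fun I _ => update I q (J ⟨ℓ - 2, by omega⟩))
    (fun I hI => ?_) (fun I hI => ?_) (fun I hI => ?_) (fun I hI => ?_)
  · simp only [mem_filter, mem_univ, true_and] at hI ⊢
    exact hI.2 ▸ hI.1.truncate hl hi rfl rfl
  · simp only [mem_filter, mem_univ, true_and] at hI ⊢
    refine ⟨hI.extend hl hi hsymm hbound hPW hJdisj hJ0 rfl, ?_⟩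
    rw [update_of_ne (Fin.ne_of_val_ne (by simp only [p, q]; omega)),
      hI.apply_eq_of_window (r := ⟨0, by omega⟩) (by simp only [p]; omega),
      shiftWindow_of_val_eq_zero rfl]
  · simp only [mem_filter, mem_univ, true_and] at hI
    rw [update_idem, ← hI.1.apply_eq_of_window (k := q) (by simp only [q]; omega),
      update_eq_self]
  · simp only [mem_filter, mem_univ, true_and] at hI
    rw [update_idem, ← hI.empty q le_rfl, update_eq_self]

end TableTuple

open Classical in
theorem stmt_9_general {V : Type*} [Fintype V] [DecidableEq V] (w : V → V → ℕ) (ℓ s i : ℕ)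
    (hl : 2 ≤ ℓ) (hsymm : ∀ x y, w x y = w y x) (hbound : ∀ x y, w x y ≤ ℓ)
    (hi : ℓ ≤ i) (his : i ≤ s)
    (X : Finset V) (J : Fin (ℓ - 1) → Finset V)
    (hJdisj : ∀ a b, a ≠ b → Disjoint (J a) (J b)) :
    TTable w ℓ s X i J =
      (if ProperWindow w ℓ J then 1 else 0) *
        ∑ J0 ∈ (X ∩ ProperSet w ℓ J).powerset,
          TTable w ℓ s X (i - 1) (ShiftWindow ℓ J0 J) := by
  by_cases hPW : ProperWindow w ℓ J
  · rw [if_pos hPW, one_mul, TTable_eq_card,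
      card_eq_sum_card_fiberwise (f := fun I => I ⟨i - ℓ, by omega⟩)
        fun I hI => mem_powerset.2 ((mem_filter.1 hI).2.apply_subset_properSet hl hi his rfl)]
    refine sum_congr rfl fun J0 hJ0 => ?_
    rw [TTable_eq_card,
      card_isTableTuple_fiber hl hi his hsymm hbound hPW hJdisj (mem_powerset.1 hJ0)]
  · rw [if_neg hPW, zero_mul, TTable_eq_card, card_eq_zero, filter_eq_empty_iff]
    exact fun _ _ h => hPW (h.properWindow hi his)

open Classical in
theorem stmt_9 {V : Type*} [Fintype V] [DecidableEq V] (w : V → V → ℕ) (ℓ s i : ℕ)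
    (hl : 2 ≤ ℓ) (hsymm : ∀ x y, w x y = w y x) (hbound : ∀ x y, w x y ≤ ℓ)
    (hdiag : ∀ v, w v v = 0) (hi : ℓ ≤ i) (his : i ≤ s)
    (X : Finset V) (J : Fin (ℓ - 1) → Finset V)
    (hJX : ∀ r, J r ⊆ X) (hJdisj : ∀ a b, a ≠ b → Disjoint (J a) (J b)) :
    TTable w ℓ s X i J =
      (if ProperWindow w ℓ J then 1 else 0) *
        ∑ J0 ∈ (X ∩ ProperSet w ℓ J).powerset,
          TTable w ℓ s X (i - 1) (ShiftWindow ℓ J0 J) :=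
  stmt_9_general w ℓ s i hl hsymm hbound hi his X J hJdisj
end
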